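/- For real x, the upper boundary values of the imaginary part of φ′(z) = Log[(√(bz−1)+√(az−1))/(√(bz−1)−√(az−1))] satisfy: lim_{ε→0⁺} Im φ′(x+iε) = π if 0 < x < a; lim_{ε→0⁺} Im φ′(x+iε) = 2·arctan√((1−ax)/(bx−1)) if a < x < b; and lim_{ε→0⁺} Im φ′(x+iε) = 0 if x > b. The lower boundary values satisfy lim_{ε→0⁺} Im φ′(x−iε) = −lim_{ε→0⁺} Im φ′(x+iε) in each of the three cases. -/

import Mathlib

open Complex Finset Filter Topology

/-- `a := (1−√c)/(1+√c)`. -/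
noncomputable def aconst (c : ℝ) : ℝ := (1 - Real.sqrt c) / (1 + Real.sqrt c)

/-- `b := (1+√c)/(1−√c)`. -/
noncomputable def bconst (c : ℝ) : ℝ := (1 + Real.sqrt c) / (1 - Real.sqrt c)

/-- The principal branch of the complex square root. -/
noncomputable def csqrt (z : ℂ) : ℂ := z ^ (1 / 2 : ℂ)

/-- The function `φ(z)`, defined using principal branches. -/
noncomputable def phiFun (c : ℝ) (z : ℂ) : ℂ :=
  z * Complex.log ((csqrt ((bconst c : ℂ) * z - 1) + csqrt ((aconst c : ℂ) * z - 1)) /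
      (csqrt ((bconst c : ℂ) * z - 1) - csqrt ((aconst c : ℂ) * z - 1))) -
  Complex.log ((csqrt (z - (aconst c : ℂ)) + csqrt (z - (bconst c : ℂ))) /
      (csqrt (z - (aconst c : ℂ)) - csqrt (z - (bconst c : ℂ))))

/-- The function `φ̃(z)`, defined using principal branches. -/
noncomputable def phiTilde (c : ℝ) (z : ℂ) : ℂ :=
  z * Complex.log ((csqrt (1 - (aconst c : ℂ) * z) + csqrt (1 - (bconst c : ℂ) * z)) /
      (csqrt (1 - (aconst c : ℂ) * z) - csqrt (1 - (bconst c : ℂ) * z))) -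
  Complex.log ((csqrt ((bconst c : ℂ) - z) + csqrt ((aconst c : ℂ) - z)) /
      (csqrt ((bconst c : ℂ) - z) - csqrt ((aconst c : ℂ) - z)))

/-- The domain `ℂ ∖ (−∞, b]` of `φ`. -/
def phiDom (c : ℝ) : Set ℂ := {z : ℂ | ¬(z.im = 0 ∧ z.re ≤ bconst c)}

/-- The domain `ℂ ∖ ((−∞, 0] ∪ [a, ∞))` of `φ̃`. -/
def phiTildeDom (c : ℝ) : Set ℂ := {z : ℂ | ¬(z.im = 0 ∧ (z.re ≤ 0 ∨ aconst c ≤ z.re))}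

/-- The function `φ′(z) = Log[(√(bz−1)+√(az−1))/(√(bz−1)−√(az−1))]`. -/
noncomputable def phiDeriv (c : ℝ) (z : ℂ) : ℂ :=
  Complex.log ((csqrt ((bconst c : ℂ) * z - 1) + csqrt ((aconst c : ℂ) * z - 1)) /
      (csqrt ((bconst c : ℂ) * z - 1) - csqrt ((aconst c : ℂ) * z - 1)))

open scoped ComplexConjugate Real

/-!
For `Im z > 0` both `b z - 1` and `a z - 1` lie in the upper half-plane, with
`Im ((a z - 1) · conj (b z - 1)) = (b - a) Im z > 0`; taking principal square roots `U`, `V`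
keeps `Im (V · conj U) > 0`, so `(U + V) / (U - V)` stays in the upper half-plane.
The principal square root and logarithm are continuous on the closed upper half-plane away
from `0`, hence `Im φ′(x + iε)` tends to the imaginary part of the principal logarithm of the
same expression evaluated at the real point `x`, which is computed explicitly on each of the
three intervals. The lower limits follow from `φ′(conj z) = conj φ′(z)`.
-/

lemma continuousWithinAt_log_of_ne_zero {z : ℂ} (hz : z ≠ 0) :
    ContinuousWithinAt log {w | 0 ≤ w.im} z := by
  by_cases h : z ∈ slitPlane
  · exact (continuousAt_clog h).continuousWithinAt
  · rw [mem_slitPlane_iff, not_or, not_lt, not_ne_iff] at h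
    exact continuousWithinAt_log_of_re_neg_of_im_zero
      (h.1.lt_of_ne fun h0 => hz (Complex.ext h0 h.2)) h.2

lemma continuousWithinAt_csqrt {z : ℂ} (hz : z ≠ 0) :
    ContinuousWithinAt csqrt {w | 0 ≤ w.im} z := by
  have hexp : ContinuousWithinAt (fun w => exp (log w * (1 / 2))) {w | 0 ≤ w.im} z :=
    continuous_exp.continuousAt.comp_continuousWithinAt
      ((continuousWithinAt_log_of_ne_zero hz).mul continuousWithinAt_const)
  refine hexp.congr_of_eventuallyEq ?_ (cpow_def_of_ne_zero hz _)
  filter_upwards [nhdsWithin_le_nhds (isOpen_ne.mem_nhds hz)] with w hw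
  exact cpow_def_of_ne_zero hw _

lemma csqrt_sq (w : ℂ) : csqrt w ^ 2 = w := by
  rw [csqrt, one_div]
  exact cpow_ofNat_inv_pow w 2

lemma re_csqrt_nonneg (w : ℂ) : 0 ≤ (csqrt w).re := by
  rw [csqrt, one_div, cpow_inv_two_re]
  exact Real.sqrt_nonneg _

lemma conj_csqrt {w : ℂ} (hw : w.arg ≠ π) : csqrt (conj w) = conj (csqrt w) := by
  rw [csqrt, csqrt, conj_cpow w _ hw, map_div₀, map_one, map_ofNat]

lemma csqrt_ofReal {r : ℝ} (hr : 0 ≤ r) : csqrt r = √r := by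
  rw [csqrt, Real.sqrt_eq_rpow, ofReal_cpow hr]
  norm_num

lemma csqrt_ofReal_of_neg {r : ℝ} (hr : r < 0) : csqrt r = √(-r) * I := by
  rw [csqrt, ofReal_cpow_of_nonpos hr.le, ← ofReal_neg, ← csqrt, csqrt_ofReal (by linarith),
    show (π : ℂ) * I * (1 / 2) = π / 2 * I by ring, exp_pi_div_two_mul_I]

lemma im_pos_of_im_sq_pos {t : ℂ} (hre : 0 ≤ t.re) (h : 0 < (t ^ 2).im) : 0 < t.im := by
  rw [sq, mul_im] at h
  nlinarith

lemma re_csqrt_pos_and_im_csqrt_pos {w : ℂ} (hw : 0 < w.im) : 0 < (csqrt w).re ∧ 0 < (csqrt w).im := by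
  have hsq : 0 < (csqrt w ^ 2).im := by rwa [csqrt_sq]
  have him := im_pos_of_im_sq_pos (re_csqrt_nonneg w) hsq
  refine ⟨?_, him⟩
  rw [sq, mul_im] at hsq
  nlinarith [re_csqrt_nonneg w]

/-- `t = csqrt w₁ * conj (csqrt w₂)` has positive real part, both roots lying in the open first
quadrant, and `t ^ 2 = w₁ * conj w₂`. -/
lemma im_csqrt_mul_conj_pos {w₁ w₂ : ℂ} (h₁ : 0 < w₁.im) (h₂ : 0 < w₂.im)
    (h : 0 < (w₁ * conj w₂).im) : 0 < (csqrt w₁ * conj (csqrt w₂)).im := by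
  obtain ⟨hre₁, him₁⟩ := re_csqrt_pos_and_im_csqrt_pos h₁
  obtain ⟨hre₂, him₂⟩ := re_csqrt_pos_and_im_csqrt_pos h₂
  refine im_pos_of_im_sq_pos ?_ ?_
  · simp only [mul_re, conj_re, conj_im]
    nlinarith [mul_pos hre₁ hre₂, mul_pos him₁ him₂]
  · rwa [mul_pow, ← map_pow, csqrt_sq, csqrt_sq]

lemma im_add_div_sub_pos {U V : ℂ} (h : 0 < (V * conj U).im) : 0 < ((U + V) / (U - V)).im := by
  have hUV : U - V ≠ 0 := by
    rintro hUV
    rw [sub_eq_zero.mp hUV, mul_conj] at h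
    simp at h
  have hnum : ((U + V) * conj (U - V)).im = 2 * (V * conj U).im := by
    simp only [mul_im, add_re, add_im, sub_re, sub_im, conj_re, conj_im]
    ring
  rw [div_eq_mul_inv, inv_def, ← mul_assoc, im_mul_ofReal, hnum]
  have := normSq_pos.mpr hUV
  positivity

/-- `phiDeriv c z = log (sqrtRatio (bconst c * z - 1) (aconst c * z - 1))` by definition. -/
noncomputable def sqrtRatio (u v : ℂ) : ℂ := (csqrt u + csqrt v) / (csqrt u - csqrt v)

lemma im_sqrtRatio_pos {u v : ℂ} (hu : 0 < u.im) (hv : 0 < v.im) (h : 0 < (v * conj u).im) :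
    0 < (sqrtRatio u v).im :=
  im_add_div_sub_pos (im_csqrt_mul_conj_pos hv hu h)

lemma csqrt_add_ne_zero {u v : ℂ} (h : u ≠ v) : csqrt u + csqrt v ≠ 0 := by
  intro hsum
  rw [add_eq_zero_iff_eq_neg] at hsum
  exact h (by rw [← csqrt_sq u, ← csqrt_sq v, hsum, neg_sq])

lemma csqrt_sub_ne_zero {u v : ℂ} (h : u ≠ v) : csqrt u - csqrt v ≠ 0 := by
  intro hdiff
  exact h (by rw [← csqrt_sq u, ← csqrt_sq v, sub_eq_zero.mp hdiff])

lemma sqrtRatio_ne_zero {u v : ℂ} (h : u ≠ v) : sqrtRatio u v ≠ 0 :=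
  div_ne_zero (csqrt_add_ne_zero h) (csqrt_sub_ne_zero h)

lemma sqrtRatio_conj {u v : ℂ} (hu : u.arg ≠ π) (hv : v.arg ≠ π) :
    sqrtRatio (conj u) (conj v) = conj (sqrtRatio u v) := by
  rw [sqrtRatio, sqrtRatio, conj_csqrt hu, conj_csqrt hv, map_div₀, map_add, map_sub]

lemma tendsto_sqrtRatio {α : Type*} {l : Filter α} {f g : α → ℂ} {u v : ℂ}
    (hf : Tendsto f l (𝓝[{w | 0 ≤ w.im}] u)) (hg : Tendsto g l (𝓝[{w | 0 ≤ w.im}] v))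
    (hu : u ≠ 0) (hv : v ≠ 0) (huv : u ≠ v) :
    Tendsto (fun x => sqrtRatio (f x) (g x)) l (𝓝 (sqrtRatio u v)) := by
  have hU := (continuousWithinAt_csqrt hu).tendsto.comp hf
  have hV := (continuousWithinAt_csqrt hv).tendsto.comp hg
  exact (hU.add hV).div (hU.sub hV) (csqrt_sub_ne_zero huv)

lemma tendsto_affine_vertical {s : ℝ} (hs : 0 ≤ s) (x : ℝ) :
    Tendsto (fun ε : ℝ => (s : ℂ) * (x + ε * I) - 1) (𝓝[>] 0)
      (𝓝[{w | 0 ≤ w.im}] ((s : ℂ) * x - 1)) := by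
  refine tendsto_nhdsWithin_iff.mpr ⟨?_, ?_⟩
  · have hcont : Continuous fun ε : ℝ => (s : ℂ) * (x + ε * I) - 1 := by fun_prop
    simpa using (hcont.tendsto 0).mono_left nhdsWithin_le_nhds
  · filter_upwards [self_mem_nhdsWithin] with ε (hε : 0 < ε)
    simpa using mul_nonneg hs hε.le

lemma im_sqrtRatio_affine_pos {a b : ℝ} (ha : 0 < a) (hab : a < b) {z : ℂ} (hz : 0 < z.im) :
    0 < (sqrtRatio (b * z - 1) (a * z - 1)).im := by
  have hb : 0 < b := ha.trans hab
  refine im_sqrtRatio_pos ?_ ?_ ?_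
  · simpa using mul_pos hb hz
  · simpa using mul_pos ha hz
  · have h : ((a * z - 1) * conj (b * z - 1)).im = (b - a) * z.im := by
      simp only [mul_im, sub_re, sub_im, mul_re, ofReal_re, ofReal_im, conj_re, conj_im, one_re,
        one_im]
      ring
    rw [h]
    exact mul_pos (by linarith) hz

lemma im_log_sqrtRatio_conj {a b : ℝ} (ha : 0 < a) (hab : a < b) {z : ℂ} (hz : 0 < z.im) :
    (log (sqrtRatio (b * conj z - 1) (a * conj z - 1))).im
      = -(log (sqrtRatio (b * z - 1) (a * z - 1))).im := by
  have harg_ne_pi : ∀ w : ℂ, 0 < w.im → w.arg ≠ π := fun w hw h =>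
    hw.ne' (arg_eq_pi_iff.mp h).2
  have hconj : ∀ s : ℝ, (s : ℂ) * conj z - 1 = conj (s * z - 1) := fun s => by simp
  have hb : 0 < b := ha.trans hab
  rw [hconj, hconj, sqrtRatio_conj (harg_ne_pi _ (by simpa using mul_pos hb hz))
    (harg_ne_pi _ (by simpa using mul_pos ha hz)),
    log_conj _ (harg_ne_pi _ (im_sqrtRatio_affine_pos ha hab hz)), conj_im]

lemma tendsto_im_log_sqrtRatio_upper {a b x : ℝ} (ha : 0 < a) (hab : a < b) (hx : x ≠ 0)
    (hax : a * x ≠ 1) (hbx : b * x ≠ 1) :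
    Tendsto (fun ε : ℝ => (log (sqrtRatio (b * (x + ε * I) - 1) (a * (x + ε * I) - 1))).im)
      (𝓝[>] 0) (𝓝 (log (sqrtRatio ((b * x - 1 : ℝ)) ((a * x - 1 : ℝ)))).im) := by
  have hb : 0 < b := ha.trans hab
  have hne : ((b * x - 1 : ℝ) : ℂ) ≠ ((a * x - 1 : ℝ) : ℂ) := by
    exact_mod_cast fun h => hx (by nlinarith)
  have hratio := tendsto_sqrtRatio (tendsto_affine_vertical hb.le x)
    (tendsto_affine_vertical ha.le x) (by exact_mod_cast sub_ne_zero.mpr hbx)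
    (by exact_mod_cast sub_ne_zero.mpr hax) (by exact_mod_cast hne)
  push_cast at hne ⊢
  have hupper : ∀ᶠ ε : ℝ in 𝓝[>] 0,
      0 ≤ (sqrtRatio (b * (x + ε * I) - 1) (a * (x + ε * I) - 1)).im := by
    filter_upwards [self_mem_nhdsWithin] with ε (hε : 0 < ε)
    exact (im_sqrtRatio_affine_pos ha hab (by simpa using hε)).le
  have hlog := (continuousWithinAt_log_of_ne_zero (sqrtRatio_ne_zero hne)).tendsto.comp
    (tendsto_nhdsWithin_iff.mpr ⟨hratio, hupper⟩)
  exact (continuous_im.tendsto _).comp hlog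

lemma tendsto_im_log_sqrtRatio_lower {a b x : ℝ} (ha : 0 < a) (hab : a < b) (hx : x ≠ 0)
    (hax : a * x ≠ 1) (hbx : b * x ≠ 1) :
    Tendsto (fun ε : ℝ => (log (sqrtRatio (b * (x - ε * I) - 1) (a * (x - ε * I) - 1))).im)
      (𝓝[>] 0) (𝓝 (-(log (sqrtRatio ((b * x - 1 : ℝ)) ((a * x - 1 : ℝ)))).im)) := by
  refine (tendsto_im_log_sqrtRatio_upper ha hab hx hax hbx).neg.congr' ?_
  filter_upwards [self_mem_nhdsWithin] with ε (hε : 0 < ε)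
  have hz : (x : ℂ) - ε * I = conj (x + ε * I) := by simp [sub_eq_add_neg]
  rw [hz, im_log_sqrtRatio_conj ha hab (by simpa using hε)]

lemma sqrtRatio_ofReal_of_nonneg {r s : ℝ} (hr : 0 ≤ r) (hs : 0 ≤ s) :
    sqrtRatio r s = ((√r + √s) / (√r - √s) : ℝ) := by
  rw [sqrtRatio, csqrt_ofReal hr, csqrt_ofReal hs]
  push_cast
  rfl

lemma sqrtRatio_ofReal_of_neg {r s : ℝ} (hr : r < 0) (hs : s < 0) :
    sqrtRatio r s = ((√(-r) + √(-s)) / (√(-r) - √(-s)) : ℝ) := by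
  rw [sqrtRatio, csqrt_ofReal_of_neg hr, csqrt_ofReal_of_neg hs, ← add_mul, ← sub_mul,
    mul_div_mul_right _ _ I_ne_zero]
  push_cast
  rfl

lemma sqrtRatio_ofReal_of_neg_of_pos {r s : ℝ} (hs : s < 0) (hr : 0 < r) :
    sqrtRatio r s = (1 + √(-s / r) * I) / (1 - √(-s / r) * I) := by
  have hsqrt : (√r : ℂ) ≠ 0 := ofReal_ne_zero.mpr (Real.sqrt_pos.mpr hr).ne'
  rw [sqrtRatio, csqrt_ofReal hr.le, csqrt_ofReal_of_neg hs, Real.sqrt_div' _ hr.le]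
  push_cast
  rw [← mul_div_mul_right (1 + (√(-s) : ℂ) / √r * I) _ hsqrt]
  congr 1 <;> field_simp

lemma log_one_add_mul_I_div_one_sub_mul_I (t : ℝ) :
    log ((1 + t * I) / (1 - t * I)) = 2 * I * Real.arctan t := by
  rw [ofReal_arctan, Complex.arctan]
  linear_combination log ((1 + t * I) / (1 - t * I)) * I_sq

lemma im_log_sqrtRatio_of_lt_of_neg {r s : ℝ} (hsr : s < r) (hr : r < 0) :
    (log (sqrtRatio r s)).im = π := by
  rw [sqrtRatio_ofReal_of_neg hr (hsr.trans hr), log_im, arg_ofReal_of_neg]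
  have hs : 0 < √(-s) := Real.sqrt_pos.mpr (by linarith)
  exact div_neg_of_pos_of_neg (by positivity)
    (sub_neg.mpr (Real.sqrt_lt_sqrt (by linarith) (by linarith)))

lemma im_log_sqrtRatio_of_neg_of_pos {r s : ℝ} (hs : s < 0) (hr : 0 < r) :
    (log (sqrtRatio r s)).im = 2 * Real.arctan √(-s / r) := by
  rw [sqrtRatio_ofReal_of_neg_of_pos hs hr, log_one_add_mul_I_div_one_sub_mul_I, mul_comm,
    im_ofReal_mul]
  norm_num [mul_comm]

lemma im_log_sqrtRatio_of_nonneg_of_lt {r s : ℝ} (hs : 0 ≤ s) (hsr : s < r) :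
    (log (sqrtRatio r s)).im = 0 := by
  rw [sqrtRatio_ofReal_of_nonneg (hs.trans hsr.le) hs, log_im, arg_ofReal_of_nonneg]
  exact div_nonneg (by positivity) (sub_nonneg.mpr (Real.sqrt_le_sqrt hsr.le))

lemma sqrt_lt_one_of_lt_one {c : ℝ} (hc1 : c < 1) : √c < 1 :=
  (Real.sqrt_lt' one_pos).mpr (by rwa [one_pow])

lemma aconst_pos {c : ℝ} (hc1 : c < 1) : 0 < aconst c :=
  div_pos (by linarith [sqrt_lt_one_of_lt_one hc1]) (by positivity)

lemma aconst_mul_bconst {c : ℝ} (hc1 : c < 1) : aconst c * bconst c = 1 := by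
  have h₁ : 1 - √c ≠ 0 := by linarith [sqrt_lt_one_of_lt_one hc1]
  have h₂ : 1 + √c ≠ 0 := by positivity
  rw [aconst, bconst, div_mul_div_comm, mul_comm (1 - √c), div_self (mul_ne_zero h₂ h₁)]

lemma aconst_lt_one {c : ℝ} (hc0 : 0 < c) : aconst c < 1 :=
  (div_lt_one (by positivity)).mpr (by linarith [Real.sqrt_pos.mpr hc0])

lemma aconst_lt_bconst {c : ℝ} (hc0 : 0 < c) (hc1 : c < 1) : aconst c < bconst c := by
  have ha := aconst_pos hc1
  have ha1 := aconst_lt_one hc0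
  nlinarith [aconst_mul_bconst hc1]

/-- Boundary values of `Im φ′` on the real axis from above and below. -/
theorem phiDeriv_boundary_im (c : ℝ) (hc0 : 0 < c) (hc1 : c < 1) :
    (∀ x : ℝ, 0 < x → x < aconst c →
      Tendsto (fun ε : ℝ => (phiDeriv c ((x : ℂ) + (ε : ℂ) * Complex.I)).im)
        (𝓝[>] 0) (𝓝 Real.pi) ∧
      Tendsto (fun ε : ℝ => (phiDeriv c ((x : ℂ) - (ε : ℂ) * Complex.I)).im)
        (𝓝[>] 0) (𝓝 (-Real.pi))) ∧
    (∀ x : ℝ, aconst c < x → x < bconst c →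
      Tendsto (fun ε : ℝ => (phiDeriv c ((x : ℂ) + (ε : ℂ) * Complex.I)).im)
        (𝓝[>] 0) (𝓝 (2 * Real.arctan (Real.sqrt ((1 - aconst c * x) / (bconst c * x - 1))))) ∧
      Tendsto (fun ε : ℝ => (phiDeriv c ((x : ℂ) - (ε : ℂ) * Complex.I)).im)
        (𝓝[>] 0) (𝓝 (-(2 * Real.arctan (Real.sqrt ((1 - aconst c * x) / (bconst c * x - 1))))))) ∧
    (∀ x : ℝ, bconst c < x →
      Tendsto (fun ε : ℝ => (phiDeriv c ((x : ℂ) + (ε : ℂ) * Complex.I)).im)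
        (𝓝[>] 0) (𝓝 0) ∧
      Tendsto (fun ε : ℝ => (phiDeriv c ((x : ℂ) - (ε : ℂ) * Complex.I)).im)
        (𝓝[>] 0) (𝓝 (-(0 : ℝ)))) := by
  have ha := aconst_pos hc1
  have hab := aconst_lt_bconst hc0 hc1
  have hab1 := aconst_mul_bconst hc1
  have boundary_values : ∀ x : ℝ, 0 < x → aconst c * x ≠ 1 → bconst c * x ≠ 1 → ∀ L : ℝ,
      (log (sqrtRatio ((bconst c * x - 1 : ℝ)) ((aconst c * x - 1 : ℝ)))).im = L →
      Tendsto (fun ε : ℝ => (phiDeriv c ((x : ℂ) + (ε : ℂ) * I)).im) (𝓝[>] 0) (𝓝 L) ∧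
      Tendsto (fun ε : ℝ => (phiDeriv c ((x : ℂ) - (ε : ℂ) * I)).im) (𝓝[>] 0) (𝓝 (-L)) := by
    rintro x hx hax hbx L rfl
    exact ⟨tendsto_im_log_sqrtRatio_upper ha hab hx.ne' hax hbx,
      tendsto_im_log_sqrtRatio_lower ha hab hx.ne' hax hbx⟩
  refine ⟨fun x hx hxa => ?_, fun x hax hxb => ?_, fun x hbx => ?_⟩
  · have hbx : bconst c * x < 1 := by nlinarith
    refine boundary_values x hx (by nlinarith) hbx.ne _ (im_log_sqrtRatio_of_lt_of_neg ?_ ?_) <;> nlinarith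
  · have hax' : aconst c * x < 1 := by nlinarith
    have hbx' : 1 < bconst c * x := by nlinarith
    refine boundary_values x (ha.trans hax) hax'.ne hbx'.ne' _ ?_
    rw [im_log_sqrtRatio_of_neg_of_pos (by linarith) (by linarith), neg_sub]
  · have hax : 1 < aconst c * x := by nlinarith
    refine boundary_values x (by linarith) hax.ne' (by nlinarith) _
      (im_log_sqrtRatio_of_nonneg_of_lt ?_ ?_) <;> nlinarith
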